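/- arXiv:1809.00742 — 2 statements merged into one kernel-verified Lean document; each statement's English description precedes it below -/
import Mathlib

section
/- A singleton set of forbidden patterns P={τ}, where τ is a permutation of length k≥1, is right-justified if and only if τ(1)=k, i.e., the first entry of τ is its largest entry. -/
open Equiv

/-- The pattern `σ` (a length-`k` permutation) is contained in the length-`n`
permutation `π` : some subsequence of `π` is order isomorphic to `σ`. -/
def Contains {k n : ℕ} (σ : Equiv.Perm (Fin k)) (π : Equiv.Perm (Fin n)) : Prop :=
  ∃ f : Fin k → Fin n, StrictMono f ∧ ∀ a b : Fin k, σ a < σ b ↔ π (f a) < π (f b)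

/-- A set of forbidden patterns, of possibly different lengths. -/
abbrev PatternSet : Type := Set ((k : ℕ) × Equiv.Perm (Fin k))

/-- `π` avoids every pattern of `P`, i.e. `π ∈ S_n(P)`. -/
def AvoidsSet {n : ℕ} (π : Equiv.Perm (Fin n)) (P : PatternSet) : Prop :=
  ∀ τ ∈ P, ¬ Contains τ.2 π

/-- The (0-indexed) position of the largest entry of `α`. -/
def maxPos {n : ℕ} (α : Equiv.Perm (Fin (n + 1))) : Fin (n + 1) := α⁻¹ (Fin.last n)

/-- `α^→` : transpose the largest entry with the entry immediately to its right
(meaningful when `maxPos α ≠ Fin.last n`, i.e. the largest entry is not last). -/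
def moveRight {n : ℕ} (α : Equiv.Perm (Fin (n + 1))) : Equiv.Perm (Fin (n + 1)) :=
  α * Equiv.swap (maxPos α) (maxPos α + 1)

/-- `α^←` : transpose the largest entry with the entry immediately to its left
(meaningful when `maxPos α ≠ 0`, i.e. the largest entry is not first). -/
def moveLeft {n : ℕ} (α : Equiv.Perm (Fin (n + 1))) : Equiv.Perm (Fin (n + 1)) :=
  α * Equiv.swap (maxPos α) (maxPos α - 1)

/-- `P` is right-justified : moving the largest entry of a `P`-avoiding permutation one
position to the right again yields a `P`-avoiding permutation. -/
def RightJustified (P : PatternSet) : Prop :=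
  ∀ (n : ℕ) (α : Equiv.Perm (Fin (n + 1))),
    AvoidsSet α P → maxPos α ≠ Fin.last n → AvoidsSet (moveRight α) P

/-- `α^{↓i}` : insert the new largest entry into site `i` of `α`; the `n+1` sites of a
length-`n` permutation are numbered `1, …, n+1` from right to left, so the new largest
entry lands at 0-indexed position `n - (i - 1)`. -/
def insertMax {n : ℕ} (α : Equiv.Perm (Fin n)) (i : ℕ) : Equiv.Perm (Fin (n + 1)) :=
  (finSuccEquivLast.permCongr.symm α.optionCongr) *
    (Fin.revPerm * Fin.cycleRange (Fin.rev (⟨n - (i - 1), by omega⟩ : Fin (n + 1))) *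
      Fin.revPerm)

/-- Site `i` of `α ∈ S_n(P)` is active (with respect to `P`). -/
def ActiveSite {n : ℕ} (P : PatternSet) (α : Equiv.Perm (Fin n)) (i : ℕ) : Prop :=
  1 ≤ i ∧ i ≤ n + 1 ∧ AvoidsSet (insertMax α i) P

/-- The number of active sites of `α` with respect to `P`. -/
noncomputable def numActive {n : ℕ} (P : PatternSet) (α : Equiv.Perm (Fin n)) : ℕ :=
  Set.ncard {i : ℕ | ActiveSite P α i}

/-- Delete the largest entry of a length-`(n+1)` permutation. -/
def deleteMax {n : ℕ} (π : Equiv.Perm (Fin (n + 1))) : Equiv.Perm (Fin n) :=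
  Equiv.removeNone (finSuccEquivLast.permCongr
    (π * (Fin.revPerm * Fin.cycleRange (Fin.rev (maxPos π)) * Fin.revPerm)⁻¹))

/-- The pattern `321`. -/
def perm321 : Equiv.Perm (Fin 3) := ⟨![2, 1, 0], ![2, 1, 0], by decide, by decide⟩
/-- The pattern `312`. -/
def perm312 : Equiv.Perm (Fin 3) := ⟨![2, 0, 1], ![1, 2, 0], by decide, by decide⟩
/-- The pattern `231`. -/
def perm231 : Equiv.Perm (Fin 3) := ⟨![1, 2, 0], ![2, 0, 1], by decide, by decide⟩
/-- The pattern `2431`. -/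
def perm2431 : Equiv.Perm (Fin 4) := ⟨![1, 3, 2, 0], ![3, 0, 2, 1], by decide, by decide⟩
/-- The pattern `4321`. -/
def perm4321 : Equiv.Perm (Fin 4) := ⟨![3, 2, 1, 0], ![3, 2, 1, 0], by decide, by decide⟩

/-- The pattern `(m+1) 1 2 … m` of length `m + 1`. -/
def sigmaM (m : ℕ) : Equiv.Perm (Fin (m + 1)) := (finRotate (m + 1))⁻¹

/-- The pattern `p (p+1) 1 2 … (p-1)` of length `p + 1`. -/
def sigmaP (p : ℕ) : Equiv.Perm (Fin (p + 1)) := ((finRotate (p + 1))⁻¹) ^ 2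

/-- The largest entry of `α` plays the role of `3` in an occurrence of the pattern
`231` : there are positions `a < b < c` with `α b` largest, `α a < α b` and `α c < α a`. -/
def MaxIn231 {n : ℕ} (α : Equiv.Perm (Fin n)) : Prop :=
  ∃ a b c : Fin n, a < b ∧ b < c ∧ (∀ x, α x ≤ α b) ∧ α a < α b ∧ α c < α a

/-- The last `p` entries of `α` are in decreasing order. -/
def LastDecreasing {n : ℕ} (α : Equiv.Perm (Fin n)) (p : ℕ) : Prop :=
  ∀ a b : Fin n, n - p ≤ (a : ℕ) → a < b → α b < α a

open Classical in
/-- The color `d(α)` : it is `1` iff the largest entry of `α` plays the role of `3` in an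
occurrence of `231` and the length-`p` suffix of `α` is not decreasing; otherwise `0`. -/
noncomputable def colorD {n : ℕ} (p : ℕ) (α : Equiv.Perm (Fin n)) : ℕ :=
  if MaxIn231 α ∧ ¬ LastDecreasing α p then 1 else 0

open Classical in
/-- The color used for `P = {312, 2431}` : it is `1` iff the largest entry of `α` plays
the role of `3` in an occurrence of `231`; otherwise `0`. -/
noncomputable def colorD2 {n : ℕ} (α : Equiv.Perm (Fin n)) : ℕ :=
  if MaxIn231 α then 1 else 0

/-!
If the largest entry of `τ` is not first, moving it one step to the left gives a permutation
of the same length different from `τ`; it avoids `τ`, and moving its largest entry back to the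
right produces `τ` itself.

Conversely, let `τ` start with its largest entry and let `f` be an occurrence of `τ` in `α^→`.
With `m` the position of the largest entry of `α`, the position `m + 1` of the largest entry of
`α^→` can only be the image of the first entry of `τ`, so `f` does not hit both `m` and
`m + 1`; hence composing `f` with the transposition of `m` and `m + 1` keeps it increasing and
turns it into an occurrence of `τ` in `α`.
-/

lemma StrictMono.swap_comp {α β : Type*} [LinearOrder α] [LinearOrder β] {f : α → β}
    (hf : StrictMono f) {i j : β} (hij : i ⋖ j)
    (hrange : ¬ (i ∈ Set.range f ∧ j ∈ Set.range f)) : StrictMono (swap i j ∘ f) := by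
  intro x y hxy
  have hlt := hf hxy
  simp only [Function.comp_apply]
  by_cases hxi : f x = i
  · have hyj : f y ≠ j := fun hyj => hrange ⟨⟨x, hxi⟩, y, hyj⟩
    rw [hxi, swap_apply_left, swap_apply_of_ne_of_ne (hxi ▸ hlt).ne' hyj]
    exact (hij.ge_of_gt (hxi ▸ hlt)).lt_of_ne hyj.symm
  by_cases hxj : f x = j
  · have hyj : j < f y := hxj ▸ hlt
    rw [hxj, swap_apply_right, swap_apply_of_ne_of_ne (hij.lt.trans hyj).ne' hyj.ne']
    exact hij.lt.trans hyj
  rw [swap_apply_of_ne_of_ne hxi hxj]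
  by_cases hyi : f y = i
  · rw [hyi, swap_apply_left]
    exact (hyi ▸ hlt).trans hij.lt
  by_cases hyj : f y = j
  · rw [hyj, swap_apply_right]
    exact (hij.le_of_lt (hyj ▸ hlt)).lt_of_ne hxi
  rwa [swap_apply_of_ne_of_ne hyi hyj]

lemma Equiv.Perm.eq_of_lt_iff_lt {n : ℕ} {σ π : Perm (Fin n)}
    (h : ∀ a b, σ a < σ b ↔ π a < π b) : σ = π := by
  have hmono : StrictMono (π * σ⁻¹) := fun x y hxy => by
    simpa using (h (σ⁻¹ x) (σ⁻¹ y)).mp (by simpa using hxy)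
  ext1 a
  simpa using (congrFun hmono.eq_id (σ a)).symm

lemma contains_iff_eq {n : ℕ} {σ π : Perm (Fin n)} : Contains σ π ↔ σ = π := by
  refine ⟨fun ⟨f, hf, h⟩ => ?_, fun h => h ▸ ⟨id, strictMono_id, fun _ _ => Iff.rfl⟩⟩
  obtain rfl := hf.eq_id
  exact Perm.eq_of_lt_iff_lt h

lemma avoidsSet_singleton {k n : ℕ} {σ : Perm (Fin k)} {π : Perm (Fin n)} :
    AvoidsSet π {⟨k, σ⟩} ↔ ¬ Contains σ π := by
  simp [AvoidsSet]

lemma forall_le_of_occurrence {k n : ℕ} {σ : Perm (Fin k)} {π : Perm (Fin n)}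
    {f : Fin k → Fin n} (h : ∀ a b, σ a < σ b ↔ π (f a) < π (f b)) {a : Fin k}
    (ha : ∀ b, π (f b) ≤ π (f a)) (b : Fin k) : σ b ≤ σ a :=
  not_lt.mp fun hlt => not_lt.mpr (ha b) ((h a b).mp hlt)

section MaxPos

variable {n : ℕ}

@[simp]
lemma apply_maxPos (α : Perm (Fin (n + 1))) : α (maxPos α) = Fin.last n := by
  simp [maxPos]

lemma maxPos_eq_of_forall_le {α : Perm (Fin (n + 1))} {a : Fin (n + 1)}
    (ha : ∀ b, α b ≤ α a) : maxPos α = a :=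
  Perm.inv_eq_iff_eq.mpr (le_antisymm (apply_maxPos α ▸ ha _) (Fin.le_last _))

lemma moveRight_apply_maxPos_add_one (α : Perm (Fin (n + 1))) :
    moveRight α (maxPos α + 1) = Fin.last n := by
  simp [moveRight]

lemma maxPos_moveLeft (α : Perm (Fin (n + 1))) : maxPos (moveLeft α) = maxPos α - 1 := by
  simp [maxPos, moveLeft]

lemma moveRight_moveLeft (α : Perm (Fin (n + 1))) : moveRight (moveLeft α) = α := by
  rw [moveRight, maxPos_moveLeft, sub_add_cancel, moveLeft, mul_assoc, swap_comm (maxPos α - 1),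
    swap_mul_self, mul_one]

lemma val_maxPos_sub_one {α : Perm (Fin (n + 1))} (h : maxPos α ≠ 0) :
    ((maxPos α - 1 : Fin (n + 1)) : ℕ) = maxPos α - 1 := by
  rw [Fin.coe_sub_one, if_neg h]

lemma moveLeft_ne_self {α : Perm (Fin (n + 1))} (h : maxPos α ≠ 0) : moveLeft α ≠ α := by
  intro heq
  have hswap : maxPos α = maxPos α - 1 := swap_eq_one_iff.mp (mul_eq_left.mp heq)
  have hpos := Fin.pos_iff_ne_zero.mpr h
  rw [Fin.ext_iff, val_maxPos_sub_one h] at hswap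
  omega

lemma maxPos_moveLeft_ne_last {α : Perm (Fin (n + 1))} (h : maxPos α ≠ 0) :
    maxPos (moveLeft α) ≠ Fin.last n := by
  rw [maxPos_moveLeft, ne_eq, Fin.ext_iff, val_maxPos_sub_one h, Fin.val_last]
  omega

lemma maxPos_covBy {α : Perm (Fin (n + 1))} (h : maxPos α ≠ Fin.last n) :
    maxPos α ⋖ maxPos α + 1 := by
  rw [Fin.covBy_iff, Nat.covBy_iff_add_one_eq, Fin.val_add_one, if_neg h]

end MaxPos

/-- A singleton set of forbidden patterns `P = {τ}`, where `τ` has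
length `k ≥ 1`, is right-justified if and only if the first entry of `τ` is its
largest entry. -/
theorem singleton_rightJustified_iff (k : ℕ) (τ : Equiv.Perm (Fin (k + 1))) :
    RightJustified ({⟨k + 1, τ⟩} : PatternSet) ↔ maxPos τ = 0 := by
  constructor
  · intro hRJ
    by_contra hτ
    have hα : AvoidsSet (moveLeft τ) {⟨k + 1, τ⟩} := by
      rw [avoidsSet_singleton, contains_iff_eq]
      exact (moveLeft_ne_self hτ).symm
    have hmoved := hRJ k _ hα (maxPos_moveLeft_ne_last hτ)
    rw [moveRight_moveLeft, avoidsSet_singleton, contains_iff_eq] at hmoved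
    exact hmoved rfl
  · intro hτ n α hα hlast
    rw [avoidsSet_singleton] at hα ⊢
    rintro ⟨f, hf, hocc⟩
    have hcov := maxPos_covBy hlast
    -- `moveRight α (f a)` unfolds to `α (swap (maxPos α) (maxPos α + 1) (f a))`.
    refine hα ⟨swap (maxPos α) (maxPos α + 1) ∘ f, hf.swap_comp hcov ?_, hocc⟩
    rintro ⟨⟨b, hb⟩, ⟨a, ha⟩⟩
    have ha0 : a = 0 := by
      refine hτ ▸ (maxPos_eq_of_forall_le (forall_le_of_occurrence hocc fun c => ?_)).symm
      rw [ha, moveRight_apply_maxPos_add_one]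
      exact Fin.le_last _
    have hba : f b < f a := hb ▸ ha ▸ hcov.lt
    exact Fin.not_lt_zero _ (ha0 ▸ hf.lt_iff_lt.mp hba)
end

section
/- Let p≥2 and P={312, 2431, δ} where δ is the length-(p+1) decreasing permutation (p+1)p...21. If α∈S_n(P) has exactly k active sites and β=α^{↓i}∈S_{n+1}(P) for some i with 1≤i≤k, then β has either i or i+1 active sites. -/
open Equiv

/-!
Write `β = α^{↓i}`. For a site `s ≤ i` the new maximum of `β^{↓s}` lands to the right of the
maximum of `β`, and an occurrence of `312`, `2431` or `(p+1)…1` in `β^{↓s}` yields one in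
`β`: an occurrence avoiding the new maximum is already one in `β`, and the new maximum can
only play the role of the largest letter, which the old maximum can take over; the single
exception, `2431` whose `2` lies between the two maxima, gives instead the `312` formed by
the old maximum, that `2` and the `3`. For a site `s ≥ i + 2` the new maximum, the entry
just left of the old maximum and the old maximum form a `312`. So the active sites of `β` are
`1, …, i`, possibly together with `i + 1`.
-/

def insertPos (n i : ℕ) : Fin (n + 1) := ⟨n - (i - 1), by omega⟩

section InsertMax

variable {n : ℕ} (α : Perm (Fin n)) (i : ℕ)

theorem insertMax_apply_insertPos : insertMax α i (insertPos n i) = Fin.last n := by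
  simp [insertMax, insertPos, Fin.cycleRange_self, Equiv.permCongr_apply]

theorem insertMax_apply_succAbove (y : Fin n) :
    insertMax α i ((insertPos n i).succAbove y) = (α y).castSucc := by
  simp [insertMax, insertPos, Fin.rev_succAbove, Fin.cycleRange_succAbove, Fin.rev_succ,
    Equiv.permCongr_apply]

theorem insertMax_apply_lt_last {x : Fin (n + 1)} (hx : x ≠ insertPos n i) :
    insertMax α i x < Fin.last n := by
  rw [Fin.lt_last_iff_ne_last, ← insertMax_apply_insertPos α i]
  exact (insertMax α i).injective.ne hx

theorem maxPos_insertMax : maxPos (insertMax α i) = insertPos n i := by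
  rw [maxPos, Perm.inv_eq_iff_eq, insertMax_apply_insertPos]

end InsertMax

def IsOccurrence {k n : ℕ} (σ : Perm (Fin k)) (π : Perm (Fin n)) (f : Fin k → Fin n) : Prop :=
  StrictMono f ∧ ∀ a b : Fin k, σ a < σ b ↔ π (f a) < π (f b)

theorem IsOccurrence.apply_eq_last {k n : ℕ} {σ : Perm (Fin (k + 1))} {π : Perm (Fin (n + 1))}
    {f : Fin (k + 1) → Fin (n + 1)} (hf : IsOccurrence σ π f) {a : Fin (k + 1)}
    (ha : π (f a) = Fin.last n) : σ a = Fin.last k := by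
  refine le_antisymm (Fin.le_last _) (not_lt.1 fun h => ?_)
  have := (hf.2 a (σ.symm (Fin.last k))).1 (by simpa using h)
  exact not_le.2 this (ha ▸ Fin.le_last _)

theorem IsOccurrence.contains_of_forall_ne_insertPos {k n : ℕ} {σ : Perm (Fin k)}
    {α : Perm (Fin n)} {i : ℕ} {f : Fin k → Fin (n + 1)} (hf : IsOccurrence σ (insertMax α i) f)
    (hne : ∀ a, f a ≠ insertPos n i) : Contains σ α := by
  choose g hg using fun a => Fin.exists_succAbove_eq (hne a)
  refine ⟨g, fun a b hab => ?_, fun a b => ?_⟩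
  · rw [← Fin.succAbove_lt_succAbove_iff (p := insertPos n i), hg, hg]
    exact hf.1 hab
  · rw [hf.2, ← hg, ← hg, insertMax_apply_succAbove, insertMax_apply_succAbove,
      Fin.castSucc_lt_castSucc_iff]

theorem isOccurrence_perm312 {n : ℕ} {π : Perm (Fin n)} {x y z : Fin n} (hxy : x < y)
    (hyz : y < z) (hyz' : π y < π z) (hzx' : π z < π x) :
    IsOccurrence perm312 π ![x, y, z] := by
  refine ⟨Fin.strictMono_iff_lt_succ.2 fun a => by fin_cases a <;> simpa, fun a b => ?_⟩
  have hyx' := hyz'.trans hzx'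
  fin_cases a <;> fin_cases b <;>
    simp [perm312, hyz', hzx', hyx', hyz'.asymm, hzx'.asymm, hyx'.asymm]

section InsertRightOfMax

variable {m : ℕ} {β : Perm (Fin (m + 1))} {s : ℕ}

theorem insertMax_apply_castSucc_maxPos (hrq : (maxPos β).castSucc < insertPos (m + 1) s) :
    insertMax β s (maxPos β).castSucc = (Fin.last m).castSucc := by
  rw [← Fin.succAbove_of_castSucc_lt _ _ hrq, insertMax_apply_succAbove, maxPos,
    Perm.coe_inv, Equiv.apply_symm_apply]

theorem insertMax_apply_lt_castSucc_maxPos (hrq : (maxPos β).castSucc < insertPos (m + 1) s)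
    {x : Fin (m + 2)} (hxq : x ≠ insertPos (m + 1) s) (hxr : x ≠ (maxPos β).castSucc) :
    insertMax β s x < insertMax β s (maxPos β).castSucc := by
  obtain ⟨y, rfl⟩ := Fin.exists_succAbove_eq hxq
  rw [insertMax_apply_castSucc_maxPos hrq, insertMax_apply_succAbove,
    Fin.castSucc_lt_castSucc_iff, Fin.lt_last_iff_ne_last]
  rintro hy
  rw [← Perm.eq_inv_iff_eq] at hy
  exact hxr (by rw [hy, ← maxPos, Fin.succAbove_of_castSucc_lt _ _ hrq])

theorem IsOccurrence.contains_of_update_maxPos {k : ℕ} {σ : Perm (Fin k)}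
    (hrq : (maxPos β).castSucc < insertPos (m + 1) s) {f : Fin k → Fin (m + 2)}
    (hf : IsOccurrence σ (insertMax β s) f) {a₀ : Fin k} (ha₀ : f a₀ = insertPos (m + 1) s)
    (hleft : ∀ b < a₀, f b < (maxPos β).castSucc) : Contains σ β := by
  set q := insertPos (m + 1) s
  set r := (maxPos β).castSucc
  have hfq : ∀ b ≠ a₀, f b ≠ q := fun b hb h => hb (hf.1.injective (h.trans ha₀.symm))
  have hfr : ∀ b ≠ a₀, f b ≠ r := by
    intro b hb
    rcases lt_or_gt_of_ne hb with h | h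
    · exact (hleft b h).ne
    · exact ((hrq.trans_eq ha₀.symm).trans (hf.1 h)).ne'
  have hbelow : ∀ b ≠ a₀, insertMax β s (f b) < insertMax β s r := fun b hb =>
    insertMax_apply_lt_castSucc_maxPos hrq (hfq b hb) (hfr b hb)
  have hf' : IsOccurrence σ (insertMax β s) (Function.update f a₀ r) := by
    refine ⟨fun a b hab => ?_, fun a b => ?_⟩
    · by_cases ha : a = a₀ <;> by_cases hb : b = a₀
      · exact absurd (ha.trans hb.symm) hab.ne
      · rw [ha, Function.update_self, Function.update_of_ne hb]
        exact hrq.trans (ha₀ ▸ hf.1 (ha ▸ hab))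
      · rw [hb, Function.update_self, Function.update_of_ne ha]
        exact hleft a (hb ▸ hab)
      · simpa [ha, hb] using hf.1 hab
    · rw [hf.2]
      by_cases ha : a = a₀ <;> by_cases hb : b = a₀
      · simp [ha, hb]
      · rw [ha, Function.update_self, Function.update_of_ne hb, ha₀, insertMax_apply_insertPos]
        exact iff_of_false (not_lt.2 (Fin.le_last _)) (hbelow b hb).asymm
      · rw [hb, Function.update_self, Function.update_of_ne ha, ha₀, insertMax_apply_insertPos]
        exact iff_of_true (insertMax_apply_lt_last _ _ (hfq a ha)) (hbelow a ha)
      · simp [ha, hb]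
  refine hf'.contains_of_forall_ne_insertPos fun a => ?_
  by_cases ha : a = a₀
  · simpa [ha] using hrq.ne
  · simpa [ha] using hfq a ha

theorem contains_of_contains_insertMax_of_apply_zero {k : ℕ} {σ : Perm (Fin (k + 1))}
    (hσ : σ 0 = Fin.last k) (hrq : (maxPos β).castSucc < insertPos (m + 1) s)
    (h : Contains σ (insertMax β s)) : Contains σ β := by
  obtain ⟨f, hf⟩ : ∃ f, IsOccurrence _ _ f := h
  by_cases hq : ∃ a, f a = insertPos (m + 1) s
  · obtain ⟨a, ha⟩ := hq
    obtain rfl : a = 0 := σ.injective <|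
      (hf.apply_eq_last (by rw [ha, insertMax_apply_insertPos])).trans hσ.symm
    exact hf.contains_of_update_maxPos hrq ha fun b hb => absurd hb (Fin.not_lt_zero b)
  · exact hf.contains_of_forall_ne_insertPos (not_exists.1 hq)

theorem contains_perm2431_or_perm312_of_contains_insertMax
    (hrq : (maxPos β).castSucc < insertPos (m + 1) s)
    (h : Contains perm2431 (insertMax β s)) : Contains perm2431 β ∨ Contains perm312 β := by
  obtain ⟨f, hf⟩ : ∃ f, IsOccurrence _ _ f := h
  by_cases hq : ∃ a, f a = insertPos (m + 1) s
  · obtain ⟨a, ha⟩ := hq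
    have hperm2431 : ∀ a, perm2431 a = Fin.last 3 → a = 1 := by decide
    obtain rfl := hperm2431 a (hf.apply_eq_last (by rw [ha, insertMax_apply_insertPos]))
    rcases lt_or_ge (f 0) (maxPos β).castSucc with h0 | h0
    · refine .inl (hf.contains_of_update_maxPos hrq ha fun b hb => ?_)
      obtain rfl : b = 0 := by omega
      exact h0
    · have hq0 : f 0 < insertPos (m + 1) s := ha ▸ hf.1 (by decide)
      have hq2 : insertPos (m + 1) s < f 2 := ha ▸ hf.1 (by decide)
      have h02 : insertMax β s (f 0) < insertMax β s (f 2) := (hf.2 0 2).1 (by decide)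
      have h2r := insertMax_apply_lt_castSucc_maxPos hrq hq2.ne' (hrq.trans hq2).ne'
      refine .inr ((isOccurrence_perm312 (h0.lt_of_ne ?_) (hf.1 (by decide)) h02 h2r
        ).contains_of_forall_ne_insertPos fun a => ?_)
      · rintro h
        exact (h02.trans h2r).ne (by rw [h])
      · fin_cases a
        exacts [hrq.ne, hq0.ne, hq2.ne']
  · exact .inl (hf.contains_of_forall_ne_insertPos (not_exists.1 hq))

theorem avoidsSet_insertMax_of_castSucc_maxPos_lt {p : ℕ}
    (hrq : (maxPos β).castSucc < insertPos (m + 1) s)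
    (hβ : AvoidsSet β {⟨3, perm312⟩, ⟨4, perm2431⟩, ⟨p + 1, Fin.revPerm⟩}) :
    AvoidsSet (insertMax β s) {⟨3, perm312⟩, ⟨4, perm2431⟩, ⟨p + 1, Fin.revPerm⟩} := by
  intro τ hτ hτc
  simp only [Set.mem_insert_iff, Set.mem_singleton_iff] at hτ
  rcases hτ with rfl | rfl | rfl
  · exact hβ _ (by simp) (contains_of_contains_insertMax_of_apply_zero (by decide) hrq hτc)
  · rcases contains_perm2431_or_perm312_of_contains_insertMax hrq hτc with h | h
    exacts [hβ ⟨4, perm2431⟩ (by simp) h, hβ ⟨3, perm312⟩ (by simp) h]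
  · exact hβ _ (by simp)
      (contains_of_contains_insertMax_of_apply_zero (Fin.rev_zero _) hrq hτc)

end InsertRightOfMax

theorem contains_perm312_insertMax_of_insertPos_lt_maxPos {m : ℕ} {β : Perm (Fin (m + 1))}
    {s : ℕ} (h : (insertPos (m + 1) s : ℕ) < maxPos β) : Contains perm312 (insertMax β s) := by
  set q := insertPos (m + 1) s
  let r' : Fin (m + 1) := ⟨maxPos β - 1, by omega⟩
  have hr' : r' < maxPos β := Fin.lt_def.2 (show (maxPos β : ℕ) - 1 < maxPos β by omega)
  have hq : q < q.succAbove r' :=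
    (Fin.lt_succAbove_iff_le_castSucc _ _).2 (Fin.le_def.2 (show (q : ℕ) ≤ maxPos β - 1 by omega))
  have hβr : β (maxPos β) = Fin.last m := by simp [maxPos]
  refine ⟨_, isOccurrence_perm312 hq (Fin.succAbove_lt_succAbove_iff.2 hr') ?_ ?_⟩
  · rw [insertMax_apply_succAbove, insertMax_apply_succAbove, Fin.castSucc_lt_castSucc_iff, hβr,
      Fin.lt_last_iff_ne_last, ← hβr]
    exact β.injective.ne hr'.ne
  · rw [insertMax_apply_succAbove, insertMax_apply_insertPos, hβr]
    exact Fin.castSucc_lt_last _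

theorem numActive_le {n : ℕ} (P : PatternSet) (α : Perm (Fin n)) : numActive P α ≤ n + 1 := by
  have hsub : {j | ActiveSite P α j} ⊆ Set.Icc 1 (n + 1) := fun j hj => ⟨hj.1, hj.2.1⟩
  simpa [numActive] using Set.ncard_le_ncard hsub (Set.finite_Icc 1 (n + 1))

theorem numActive_insert_cases_general (p : ℕ) (P : PatternSet)
    (hP : P = {⟨3, perm312⟩, ⟨4, perm2431⟩,
      ⟨p + 1, (Fin.revPerm : Equiv.Perm (Fin (p + 1)))⟩})
    {n : ℕ} (α : Equiv.Perm (Fin n)) (k i : ℕ)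
    (hk : numActive P α = k) (hi1 : 1 ≤ i) (hik : i ≤ k)
    (hβ : AvoidsSet (insertMax α i) P) :
    numActive P (insertMax α i) = i ∨ numActive P (insertMax α i) = i + 1 := by
  have hin : i ≤ n + 1 := hik.trans (hk ▸ numActive_le P α)
  have hlow : Set.Icc 1 i ⊆ {s | ActiveSite P (insertMax α i) s} := by
    rintro s ⟨hs1, hsi⟩
    refine ⟨hs1, by omega, ?_⟩
    rw [hP] at hβ ⊢
    exact avoidsSet_insertMax_of_castSucc_maxPos_lt
      (by rw [maxPos_insertMax, Fin.lt_def]; simp only [insertPos, Fin.castSucc_mk]; omega) hβ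
  have hupp : {s | ActiveSite P (insertMax α i) s} ⊆ Set.Icc 1 (i + 1) :=
    fun s ⟨hs1, _, hs⟩ => ⟨hs1, not_lt.1 fun hsi => hs ⟨3, perm312⟩ (by simp [hP])
      (contains_perm312_insertMax_of_insertPos_lt_maxPos
        (by rw [maxPos_insertMax]; simp only [insertPos]; omega))⟩
  have h1 := Set.ncard_le_ncard hlow ((Set.finite_Icc 1 (i + 1)).subset hupp)
  have h2 := Set.ncard_le_ncard hupp (Set.finite_Icc 1 (i + 1))
  rw [Set.ncard_Icc_nat] at h1 h2
  unfold numActive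
  omega

/-- For `p ≥ 2` and `P = {312, 2431, (p+1)p…21}` : if `α ∈ S_n(P)` has
exactly `k` active sites and `β = α^{↓i} ∈ S_{n+1}(P)` for some `1 ≤ i ≤ k`, then `β`
has either `i` or `i + 1` active sites. -/
theorem numActive_insert_cases (p : ℕ) (hp : 2 ≤ p) (P : PatternSet)
    (hP : P = {⟨3, perm312⟩, ⟨4, perm2431⟩,
      ⟨p + 1, (Fin.revPerm : Equiv.Perm (Fin (p + 1)))⟩})
    {n : ℕ} (α : Equiv.Perm (Fin n)) (hα : AvoidsSet α P) (k i : ℕ)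
    (hk : numActive P α = k) (hi1 : 1 ≤ i) (hik : i ≤ k)
    (hβ : AvoidsSet (insertMax α i) P) :
    numActive P (insertMax α i) = i ∨ numActive P (insertMax α i) = i + 1 :=
  numActive_insert_cases_general p P hP α k i hk hi1 hik hβ
end
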